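/- arXiv:2306.12102 — 3 statements merged into one kernel-verified Lean document; each statement's English description precedes it below -/
import Mathlib

section
/- Let d≥1, N>0, β>0 and let U be a nice weight function. Then for every finite K⊂ℤ^d and every pair of vertices o,y∈K with r:=d(o,y) the graph distance in ℤ^d, the connection probability of the random walk loop soup on G_K satisfies 𝒫_{G_K,U,N,β}(o↔y) ≤ (N/2)·Σ_{k≥r} (2dβ)^k·χ_U(k). -/
open scoped BigOperators ENNReal NNReal

namespace RWLS

variable {V : Type*}

/-- A rooted oriented loop, encoded as the full vertex sequence `(ℓ(0),…,ℓ(k))` with `k ≥ 1`,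
consecutive vertices adjacent, and `ℓ(k) = ℓ(0)`. -/
def IsLoopSeq (G : SimpleGraph V) (l : List V) : Prop :=
  2 ≤ l.length ∧ List.Chain' G.Adj l ∧ l.getLast? = l.head?

/-- Rooted oriented loops of a graph. -/
def Loop (G : SimpleGraph V) : Type _ := {l : List V // IsLoopSeq G l}

/-- The length `|ℓ| = k` of a rooted oriented loop. -/
def Loop.len {G : SimpleGraph V} (ℓ : Loop G) : ℕ := ℓ.val.length - 1

/-- The core `(ℓ(0),…,ℓ(k−1))` of a loop. -/
def Loop.core {G : SimpleGraph V} (ℓ : Loop G) : List V := ℓ.val.dropLast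

/-- `ℓ(i)`, the `i`-th vertex of a loop (read cyclically). -/
def Loop.vert {G : SimpleGraph V} (ℓ : Loop G) (i : ℕ) : V :=
  ℓ.core.get ⟨i % ℓ.core.length, Nat.mod_lt _ (by
    have h := ℓ.prop.1
    simp only [Loop.core, List.length_dropLast]
    omega)⟩

/-- Number of visits of the loop at `x` (the final time `k` is not counted). -/
def Loop.nx [DecidableEq V] {G : SimpleGraph V} (ℓ : Loop G) (x : V) : ℕ := ℓ.core.count x

/-- Configurations of the random walk loop soup:
finite ordered tuples of rooted oriented loops. -/
abbrev Config (G : SimpleGraph V) := List (Loop G)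

/-- The local time of a configuration at `x`. -/
def locTime [DecidableEq V] {G : SimpleGraph V} (ω : Config G) (x : V) : ℕ :=
  (ω.map fun ℓ => ℓ.nx x).sum

/-- The (unnormalised) weight of a configuration in the random walk loop soup. -/
noncomputable def weight [Fintype V] [DecidableEq V] (G : SimpleGraph V) (U : ℕ → ℝ)
    (N β : ℝ) (ω : Config G) : ℝ :=
  (1 / (Nat.factorial ω.length : ℝ)) * (N / 2) ^ ω.length *
    (ω.map fun ℓ => β ^ ℓ.len / (ℓ.len : ℝ)).prod * ∏ x : V, U (locTime ω x)

/-- The partition function of the random walk loop soup. -/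
noncomputable def Z [Fintype V] [DecidableEq V] (G : SimpleGraph V) (U : ℕ → ℝ)
    (N β : ℝ) : ℝ :=
  ∑' ω : Config G, weight G U N β ω

/-- The probability of an event under the random walk loop soup measure. -/
noncomputable def prob [Fintype V] [DecidableEq V] (G : SimpleGraph V) (U : ℕ → ℝ) (N β : ℝ)
    (A : Set (Config G)) : ℝ :=
  (∑' ω : A, weight G U N β (ω : Config G)) / Z G U N β

/-- The expectation of a function under the random walk loop soup measure. -/
noncomputable def expect [Fintype V] [DecidableEq V] (G : SimpleGraph V) (U : ℕ → ℝ) (N β : ℝ)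
    (f : Config G → ℝ) : ℝ :=
  (∑' ω : Config G, f ω * weight G U N β ω) / Z G U N β

/-- `U` is `M`-good: `U n ≤ (M/n) · U (n-1)` for all `n ≥ 1`. -/
def MGood (M : ℕ) (U : ℕ → ℝ) : Prop := ∀ n : ℕ, 1 ≤ n → U n ≤ ((M : ℝ) / n) * U (n - 1)

/-- `U` is good: `M`-good for some `M ∈ ℕ`. -/
def Good (U : ℕ → ℝ) : Prop := ∃ M : ℕ, 1 ≤ M ∧ MGood M U

/-- `U` takes non-negative values (it is a weight function). -/
def WeightFn (U : ℕ → ℝ) : Prop := ∀ n, 0 ≤ U n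

/-- `U` is nice: non-negative, good, `U 0 = 1`, `U ≤ 1`, and submultiplicative. -/
def Nice (U : ℕ → ℝ) : Prop :=
  WeightFn U ∧ Good U ∧ U 0 = 1 ∧ (∀ n, U n ≤ 1) ∧ ∀ m n : ℕ, U (m + n) ≤ U m * U n

/-- The event that some loop of the configuration visits both `x` and `y`. -/
def connEvent {G : SimpleGraph V} (x y : V) : Set (Config G) :=
  {ω | ∃ ℓ ∈ ω, x ∈ ℓ.val ∧ y ∈ ℓ.val}

end RWLS
namespace RWLS

/-- The nearest-neighbour lattice graph on `ℤ^d`. -/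
def lattice (d : ℕ) : SimpleGraph (Fin d → ℤ) where
  Adj x y := ∑ i, |x i - y i| = 1
  symm := by
    constructor
    intro x y h
    calc (∑ i, |y i - x i|) = ∑ i, |x i - y i| :=
          Finset.sum_congr rfl fun i _ => abs_sub_comm _ _
      _ = 1 := h
  loopless := by constructor; intro x h; simp at h

instance (d : ℕ) : DecidableRel (lattice d).Adj :=
  fun x y => inferInstanceAs (Decidable (∑ i, |x i - y i| = 1))

/-- The ℓ¹ distance on `ℤ^d`, i.e. the graph distance of the lattice. -/
def dist1 {d : ℕ} (x y : Fin d → ℤ) : ℕ := (∑ i, |x i - y i|).toNat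

/-- The random walk loop soup with weight function `U` admits exponential decay of the
connection probabilities at `(β, N)`. -/
def ExpDecay (d : ℕ) (U : ℕ → ℝ) (N β : ℝ) : Prop :=
  ∃ c : ℝ, 0 < c ∧ ∀ (K : Finset (Fin d → ℤ)) (x y : Fin d → ℤ) (hx : x ∈ K) (hy : y ∈ K),
    prob ((lattice d).induce (↑K : Set (Fin d → ℤ))) U N β
        (connEvent ⟨x, by simpa using hx⟩ ⟨y, by simpa using hy⟩)
      ≤ Real.exp (-c * (dist1 x y : ℝ))

/-- The critical inverse temperature of the random walk loop soup on `ℤ^d`. -/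
noncomputable def betaCrit (d : ℕ) (U : ℕ → ℝ) (N : ℝ) : ℝ≥0∞ :=
  ⨆ (β : ℝ≥0) (_ : ExpDecay d U N (β : ℝ)), (β : ℝ≥0∞)

end RWLS
namespace RWLS

/-- The unit step of `ℤ^d` indexed by a coordinate and a sign: the `2d` nearest
neighbours of the origin. -/
def stepVec {d : ℕ} (p : Fin d × Bool) : Fin d → ℤ :=
  fun i => if i = p.1 then (if p.2 then 1 else -1) else 0

/-- Position after `j` steps of the simple random walk (started at the origin)
encoded by the step sequence `s`. -/
def walkPos {d k : ℕ} (s : Fin k → Fin d × Bool) (j : ℕ) : Fin d → ℤ :=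
  ∑ i ∈ Finset.univ.filter (fun i : Fin k => (i : ℕ) < j), stepVec (s i)

/-- The number of visits `n_x^{(k)}(X)` of the walk at `x` during times `1,…,k`. -/
def nVisits {d k : ℕ} (s : Fin k → Fin d × Bool) (x : Fin d → ℤ) : ℕ :=
  ((Finset.Icc 1 k).filter fun j => walkPos s j = x).card

/-- `χ_U(k) = E_o[∏_x U(n_x^{(k)}(X))]` for the simple random walk on `ℤ^d`: the average,
over the `(2d)^k` step sequences, of the product of `U` of the visit numbers (the product is
restricted to the visited sites, which is the full product whenever `U 0 = 1`). -/
noncomputable def chi (d : ℕ) (U : ℕ → ℝ) (k : ℕ) : ℝ :=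
  ((2 * d : ℝ) ^ k)⁻¹ *
    ∑ s : Fin k → Fin d × Bool, ∏ x ∈ (Finset.Icc 1 k).image (walkPos s), U (nVisits s x)

/-- The lower bound `β̃_c(U)` for the critical inverse temperature, defined through the
exponential rate of `χ_U`. -/
noncomputable def betaTilde (d : ℕ) (U : ℕ → ℝ) : ℝ≥0∞ :=
  ⨆ (β : ℝ≥0) (_ : 0 < β ∧
      Filter.limsup (fun k : ℕ => ((Real.log (chi d U k) / k : ℝ) : EReal)) Filter.atTop
        < ((-Real.log (2 * d * (β : ℝ)) : ℝ) : EReal)), (β : ℝ≥0∞)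

end RWLS

/-!
Pulling out of a configuration a loop that visits both `o` and `y`, submultiplicativity of `U`
bounds the weight of the configuration by `N/2` times the weight `β^|ℓ|/|ℓ| · ∏ₓ U(nₓ(ℓ))` of that
loop times the weight of the rest, so `P(o ↔ y)` is at most `N/2` times the total weight of the
loops through `o` and `y`. Such a loop of length `k` is determined by a time `j < k` at which it
sits at `o` and by its `k` steps from there, i.e. by a path of the simple random walk; its local
times are the visit numbers of that path, and `k ≥ d(o, y)`. The `k` choices of `j` cancel the
factor `1/k`, and the `(2d)^k` step sequences average to `χ_U(k)`.
-/

open Finset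

namespace RWLS

lemma exists_lt_add_mod_eq_mod {k : ℕ} (hk : 0 < k) (j m : ℕ) :
    ∃ i < k, (j + i) % k = m % k := by
  refine ⟨(m + (k - j % k)) % k, Nat.mod_lt _ hk, ?_⟩
  have hj := Nat.mod_lt j hk
  rw [Nat.add_mod_mod, ← Nat.mod_add_mod, show j % k + (m + (k - j % k)) = m + k by omega,
    Nat.add_mod_right]

namespace Loop

variable {V : Type*} {G : SimpleGraph V} (γ : Loop G)

lemma length_val : γ.val.length = γ.len + 1 := by
  have := γ.prop.1
  simp only [Loop.len]
  omega

lemma len_pos : 0 < γ.len := by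
  have := γ.prop.1
  simp only [Loop.len]
  omega

lemma core_length : γ.core.length = γ.len := by
  simp [Loop.core, Loop.len]

lemma vert_periodic : Function.Periodic γ.vert γ.len := by
  intro m
  simp only [Loop.vert, core_length, Nat.add_mod_right]

lemma vert_eq_getElem_val {i : ℕ} (hi : i < γ.val.length) : γ.vert i = γ.val[i] := by
  rcases lt_or_eq_of_le (Nat.lt_succ_iff.mp (γ.length_val ▸ hi)) with hlt | rfl
  · have hi' : i % γ.core.length = i := Nat.mod_eq_of_lt (γ.core_length ▸ hlt)
    simp only [Loop.vert, List.get_eq_getElem, hi']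
    simp [Loop.core]
  · have hclosed := γ.prop.2.2
    rw [List.getLast?_eq_getElem?, List.head?_eq_getElem?] at hclosed
    simp only [length_val, Nat.add_sub_cancel] at hclosed
    rw [List.getElem?_eq_getElem hi, List.getElem?_eq_getElem (by omega)] at hclosed
    rw [Option.some_injective _ hclosed, ← zero_add γ.len, γ.vert_periodic]
    simp [Loop.vert, Loop.core]

lemma adj_vert (m : ℕ) : G.Adj (γ.vert m) (γ.vert (m + 1)) := by
  have hm := Nat.mod_lt m γ.len_pos
  have hchain := List.isChain_iff_getElem.mp γ.prop.2.1 (m % γ.len) (by rw [length_val]; omega)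
  rwa [← vert_eq_getElem_val, ← vert_eq_getElem_val, ← γ.vert_periodic.map_mod_nat (_ + 1),
    Nat.mod_add_mod, γ.vert_periodic.map_mod_nat, γ.vert_periodic.map_mod_nat] at hchain

lemma ext_vert {γ' : Loop G} (hlen : γ.len = γ'.len) (hvert : ∀ m, γ.vert m = γ'.vert m) :
    γ = γ' := by
  apply Subtype.ext
  apply List.ext_getElem (by rw [length_val, length_val, hlen])
  intro i hi hi'
  rw [← vert_eq_getElem_val, ← vert_eq_getElem_val, hvert]

lemma exists_vert_eq {x : V} (hx : x ∈ γ.val) : ∃ i < γ.len, γ.vert i = x := by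
  obtain ⟨i, hi, rfl⟩ := List.mem_iff_getElem.mp hx
  exact ⟨i % γ.len, Nat.mod_lt i γ.len_pos, by
    rw [γ.vert_periodic.map_mod_nat, vert_eq_getElem_val]⟩

lemma vert_eq_of_mod_eq {a b : ℕ} (h : a % γ.len = b % γ.len) : γ.vert a = γ.vert b := by
  rw [← γ.vert_periodic.map_mod_nat a, h, γ.vert_periodic.map_mod_nat]

lemma core_eq_map_range : γ.core = (List.range γ.len).map γ.vert := by
  apply List.ext_getElem (by simp [core_length])
  intro i hi _
  rw [core_length] at hi
  rw [List.getElem_map, List.getElem_range, vert_eq_getElem_val _ (by rw [length_val]; omega)]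
  simp [Loop.core]

lemma nx_eq_count [DecidableEq V] (x : V) : γ.nx x = Nat.count (fun i => γ.vert i = x) γ.len := by
  simp only [Loop.nx, core_eq_map_range, List.count, List.countP_map, Nat.count]
  rfl

lemma nx_eq_card_filter_Icc [DecidableEq V] (x : V) (j : ℕ) :
    γ.nx x = #{i ∈ Icc 1 γ.len | γ.vert (j + i) = x} := by
  have hp : Function.Periodic (fun i => γ.vert i = x) γ.len := γ.vert_periodic.comp (· = x)
  have hshift := Nat.count_add' (fun i => γ.vert i = x) j γ.len
  simp only [hp _] at hshift
  rw [← Finset.Ico_add_one_right_eq_Icc, add_comm γ.len,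
    Nat.filter_Ico_card_eq_of_periodic _ _ _ (hp.const_add j), nx_eq_count]
  have := Nat.count_add (fun i => γ.vert i = x) j γ.len
  omega

end Loop

section Weight

variable {V : Type*} {G : SimpleGraph V} {U : ℕ → ℝ} {N β : ℝ}

lemma prod_map_pow_div_len_nonneg (hβ : 0 ≤ β) (ω : Config G) :
    0 ≤ (ω.map fun ℓ => β ^ ℓ.len / (ℓ.len : ℝ)).prod := by
  refine List.prod_nonneg ?_
  simp only [List.mem_map]
  rintro _ ⟨ℓ, -, rfl⟩
  positivity

variable [Fintype V] [DecidableEq V]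

noncomputable def loopWeight (U : ℕ → ℝ) (β : ℝ) (γ : Loop G) : ℝ :=
  β ^ γ.len / γ.len * ∏ x, U (γ.nx x)

lemma loopWeight_nonneg (hβ : 0 ≤ β) (hU : ∀ n, 0 ≤ U n) (γ : Loop G) :
    0 ≤ loopWeight U β γ :=
  mul_nonneg (by positivity) (prod_nonneg fun _ _ => hU _)

lemma weight_nonneg (hN : 0 ≤ N) (hβ : 0 ≤ β) (hU : ∀ n, 0 ≤ U n) (ω : Config G) :
    0 ≤ weight G U N β ω :=
  mul_nonneg (mul_nonneg (by positivity) (prod_map_pow_div_len_nonneg hβ ω))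
    (prod_nonneg fun _ _ => hU _)

lemma weight_perm {ω ω' : Config G} (h : ω.Perm ω') : weight G U N β ω = weight G U N β ω' := by
  have hloc : ∀ x, locTime ω x = locTime ω' x := fun x => (h.map _).sum_eq
  simp only [weight, h.length_eq, (h.map _).prod_eq, hloc]

lemma weight_cons_le (hN : 0 ≤ N) (hβ : 0 ≤ β) (hU : ∀ n, 0 ≤ U n)
    (hUsub : ∀ m n, U (m + n) ≤ U m * U n) (γ : Loop G) (ω : Config G) :
    weight G U N β (γ :: ω) ≤ N / 2 * loopWeight U β γ * weight G U N β ω / (ω.length + 1) := by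
  have hloc : ∀ x, locTime (γ :: ω) x = γ.nx x + locTime ω x := fun x => by
    simp [locTime]
  have hsub : ∏ x, U (locTime (γ :: ω) x) ≤ (∏ x, U (γ.nx x)) * ∏ x, U (locTime ω x) := by
    rw [← prod_mul_distrib]
    exact prod_le_prod (fun _ _ => hU _) fun x _ => hloc x ▸ hUsub _ _
  have hprod := prod_map_pow_div_len_nonneg hβ ω
  calc weight G U N β (γ :: ω)
      ≤ 1 / ((ω.length + 1).factorial : ℝ) * (N / 2) ^ (ω.length + 1) *
          (β ^ γ.len / γ.len * (ω.map fun ℓ => β ^ ℓ.len / (ℓ.len : ℝ)).prod) *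
          ((∏ x, U (γ.nx x)) * ∏ x, U (locTime ω x)) := by
        simp only [weight, List.length_cons, List.map_cons, List.prod_cons]
        gcongr
    _ = N / 2 * loopWeight U β γ * weight G U N β ω / (ω.length + 1) := by
        rw [Nat.factorial_succ, loopWeight, weight]
        push_cast
        field_simp
        ring

lemma tsum_ite_le_ofReal_div_succ (L : ℕ) (a : ℝ) :
    ∑' n : ℕ, (if n ≤ L then ENNReal.ofReal (a / (L + 1)) else 0) = ENNReal.ofReal a := by
  rw [tsum_eq_sum (s := range (L + 1)) fun n hn => if_neg (by simpa using hn),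
    sum_congr rfl fun n hn => if_pos (Nat.lt_succ_iff.mp (mem_range.mp hn)), sum_const,
    card_range, nsmul_eq_mul, ← ENNReal.ofReal_natCast, ← ENNReal.ofReal_mul (by positivity)]
  push_cast
  rw [mul_div_cancel₀ _ (by positivity)]

/-- Removing the loop at a position `n` where `P` holds, and remembering `n`, is injective; the
factor `1 / (|ω'| + 1)` coming from `1 / |ω|!` pays for the `|ω'| + 1` possible positions. -/
lemma tsum_weight_exists_loop_le (hN : 0 ≤ N) (hβ : 0 ≤ β) (hU : ∀ n, 0 ≤ U n)
    (hUsub : ∀ m n, U (m + n) ≤ U m * U n) (P : Loop G → Prop) :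
    ∑' ω : {ω : Config G // ∃ ℓ ∈ ω, P ℓ}, ENNReal.ofReal (weight G U N β ω) ≤
      ENNReal.ofReal (N / 2) * (∑' γ : {γ : Loop G // P γ}, ENNReal.ofReal (loopWeight U β γ.1)) *
        ∑' ω, ENNReal.ofReal (weight G U N β ω) := by
  have hexists (ω : {ω : Config G // ∃ ℓ ∈ ω, P ℓ}) : ∃ n, ∃ h : n < ω.1.length, P ω.1[n] := by
    obtain ⟨ℓ, hℓ, hP⟩ := ω.2
    obtain ⟨n, h, rfl⟩ := List.mem_iff_getElem.mp hℓ
    exact ⟨n, h, hP⟩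
  choose n hn hP using hexists
  let ι (ω : {ω : Config G // ∃ ℓ ∈ ω, P ℓ}) : {γ : Loop G // P γ} × Config G × ℕ :=
    (⟨ω.1[n ω]'(hn ω), hP ω⟩, ω.1.eraseIdx (n ω), n ω)
  let g (t : {γ : Loop G // P γ} × Config G × ℕ) : ℝ≥0∞ :=
    if t.2.2 ≤ t.2.1.length then
      ENNReal.ofReal (N / 2 * loopWeight U β t.1.1 * weight G U N β t.2.1 / (t.2.1.length + 1))
    else 0
  have hι : Function.Injective ι := by
    intro ω ω' h
    simp only [ι, Prod.mk.injEq, Subtype.mk.injEq] at h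
    obtain ⟨hγ, hrest, hidx⟩ := h
    apply Subtype.ext
    rw [← List.insertIdx_eraseIdx_getElem (hn ω), ← List.insertIdx_eraseIdx_getElem (hn ω'), hγ,
      hrest, hidx]
  have hbound (ω : {ω : Config G // ∃ ℓ ∈ ω, P ℓ}) :
      ENNReal.ofReal (weight G U N β ω) ≤ g (ι ω) := by
    have hlen := List.length_eraseIdx_of_lt (hn ω)
    have hlt := hn ω
    simp only [g, ι, if_pos (show n ω ≤ (ω.1.eraseIdx (n ω)).length by omega)]
    rw [weight_perm (List.getElem_cons_eraseIdx_perm (hn ω)).symm]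
    exact ENNReal.ofReal_le_ofReal (weight_cons_le hN hβ hU hUsub _ _)
  calc ∑' ω : {ω : Config G // ∃ ℓ ∈ ω, P ℓ}, ENNReal.ofReal (weight G U N β ω)
      ≤ ∑' ω, g (ι ω) := ENNReal.tsum_le_tsum hbound
    _ ≤ ∑' t, g t := ENNReal.tsum_comp_le_tsum_of_injective hι g
    _ = ∑' (γ : {γ : Loop G // P γ}) (ω : Config G), ENNReal.ofReal (N / 2) *
          ENNReal.ofReal (loopWeight U β γ.1) * ENNReal.ofReal (weight G U N β ω) := by
        rw [ENNReal.tsum_prod']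
        refine tsum_congr fun γ => ?_
        rw [ENNReal.tsum_prod']
        refine tsum_congr fun ω => ?_
        simp only [g]
        rw [tsum_ite_le_ofReal_div_succ, ENNReal.ofReal_mul (mul_nonneg (by linarith)
          (loopWeight_nonneg hβ hU _)), ENNReal.ofReal_mul (by linarith)]
    _ = _ := by
        simp only [ENNReal.tsum_mul_left, ENNReal.tsum_mul_right]

lemma ofReal_prob_exists_loop_le (hN : 0 ≤ N) (hβ : 0 ≤ β) (hU : ∀ n, 0 ≤ U n)
    (hUsub : ∀ m n, U (m + n) ≤ U m * U n) (P : Loop G → Prop) :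
    ENNReal.ofReal (prob G U N β {ω | ∃ ℓ ∈ ω, P ℓ}) ≤
      ENNReal.ofReal (N / 2) * ∑' γ : {γ : Loop G // P γ}, ENNReal.ofReal (loopWeight U β γ.1) := by
  have hw := weight_nonneg (G := G) hN hβ hU
  unfold prob Z
  by_cases hs : Summable (weight G U N β)
  · refine (ENNReal.ofReal_div_le (tsum_nonneg hw)).trans (ENNReal.div_le_of_le_mul ?_)
    rw [ENNReal.ofReal_tsum_of_nonneg (fun ω => hw _) (hs.subtype _),
      ENNReal.ofReal_tsum_of_nonneg hw hs]
    exact tsum_weight_exists_loop_le hN hβ hU hUsub P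
  · simp [tsum_eq_zero_of_not_summable hs]

end Weight

section Lattice

variable {d : ℕ}

section Walk

variable {k : ℕ}

lemma exists_eq_add_stepVec {x y : Fin d → ℤ} (h : (lattice d).Adj x y) :
    ∃ p : Fin d × Bool, y = x + stepVec p := by
  have hsum : ∑ i, |y i - x i| = 1 := by
    have h : ∑ i, |x i - y i| = 1 := h
    simpa only [abs_sub_comm] using h
  obtain ⟨i₀, -, hi₀⟩ := exists_ne_zero_of_sum_ne_zero (hsum ▸ one_ne_zero)
  have hrest := add_sum_erase univ (fun i => |y i - x i|) (mem_univ i₀)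
  have hle : |y i₀ - x i₀| ≤ 1 :=
    hsum ▸ single_le_sum (f := fun i => |y i - x i|) (fun i _ => abs_nonneg _) (mem_univ i₀)
  have hone : |y i₀ - x i₀| = 1 := le_antisymm hle (Int.one_le_abs (abs_ne_zero.mp hi₀))
  have hzero : ∀ i ∈ univ.erase i₀, |y i - x i| = 0 :=
    (sum_eq_zero_iff_of_nonneg fun i _ => abs_nonneg _).mp (by omega)
  refine ⟨(i₀, decide (0 < y i₀ - x i₀)), funext fun i => ?_⟩
  simp only [Pi.add_apply, stepVec]
  split_ifs with hi hpos
  · subst hi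
    rw [decide_eq_true_eq] at hpos
    rw [abs_of_pos hpos] at hone
    omega
  · subst hi
    rw [decide_eq_true_eq] at hpos
    rw [abs_of_nonpos (not_lt.mp hpos)] at hone
    omega
  · have := abs_eq_zero.mp (hzero i (mem_erase.mpr ⟨hi, mem_univ i⟩))
    omega

lemma sum_abs_stepVec (p : Fin d × Bool) : ∑ i, |stepVec p i| = 1 := by
  rw [sum_eq_single p.1 (fun i _ hi => by simp [stepVec, hi]) (by simp)]
  rcases p with ⟨i, _ | _⟩ <;> simp [stepVec]

lemma walkPos_zero (s : Fin k → Fin d × Bool) : walkPos s 0 = 0 := by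
  simp [walkPos]

lemma walkPos_succ (s : Fin k → Fin d × Bool) {j : ℕ} (hj : j < k) :
    walkPos s (j + 1) = walkPos s j + stepVec (s ⟨j, hj⟩) := by
  have : univ.filter (fun i : Fin k => (i : ℕ) < j + 1) =
      insert ⟨j, hj⟩ (univ.filter fun i : Fin k => (i : ℕ) < j) := by
    ext i
    simp only [mem_insert, mem_filter, mem_univ, true_and, Fin.ext_iff]
    omega
  rw [walkPos, this, sum_insert (by simp), add_comm]
  rfl

lemma sum_abs_walkPos_le (s : Fin k → Fin d × Bool) (j : ℕ) : ∑ t, |walkPos s j t| ≤ j :=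
  calc ∑ t, |walkPos s j t|
      ≤ ∑ t, ∑ i ∈ univ.filter (fun i : Fin k => (i : ℕ) < j), |stepVec (s i) t| := by
        gcongr with t
        simpa [walkPos] using abs_sum_le_sum_abs _ _
    _ = #(univ.filter fun i : Fin k => (i : ℕ) < j) := by
        rw [sum_comm]
        simp [sum_abs_stepVec]
    _ ≤ j := by
        exact_mod_cast (card_le_card_of_injOn (t := range j) Fin.val (fun i hi => by simpa using hi)
          Fin.val_injective.injOn).trans_eq (card_range j)

def visitWeight {M : Type*} [CommMonoid M] (U : ℕ → M) (s : Fin k → Fin d × Bool) : M :=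
  ∏ x ∈ (Icc 1 k).image (walkPos s), U (nVisits s x)

end Walk


noncomputable def latticeStep {x y : Fin d → ℤ} (h : (lattice d).Adj x y) : Fin d × Bool :=
  (exists_eq_add_stepVec h).choose

lemma eq_add_stepVec_latticeStep {x y : Fin d → ℤ} (h : (lattice d).Adj x y) :
    y = x + stepVec (latticeStep h) :=
  (exists_eq_add_stepVec h).choose_spec

section Encoding

variable {S : Set (Fin d → ℤ)}

namespace Loop

variable (γ : Loop ((lattice d).induce S))

noncomputable def stepsFrom (j : ℕ) : Fin γ.len → Fin d × Bool :=
  fun i => latticeStep (γ.adj_vert (j + i))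

lemma coe_vert_add (j : ℕ) {i : ℕ} (hi : i ≤ γ.len) :
    (γ.vert (j + i) : Fin d → ℤ) = γ.vert j + walkPos (γ.stepsFrom j) i := by
  induction i with
  | zero => simp [walkPos_zero]
  | succ i ih =>
    rw [walkPos_succ _ (by omega), ← add_assoc (γ.vert j : Fin d → ℤ), ← ih (by omega)]
    exact eq_add_stepVec_latticeStep (γ.adj_vert (j + i))

lemma vert_add_eq_iff (j : ℕ) {i : ℕ} (hi : i ≤ γ.len) (x : S) :
    γ.vert (j + i) = x ↔ walkPos (γ.stepsFrom j) i = x - γ.vert j := by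
  rw [Subtype.ext_iff, γ.coe_vert_add j hi, eq_sub_iff_add_eq']

lemma nx_eq_nVisits [DecidableEq S] (j : ℕ) (x : S) :
    γ.nx x = nVisits (γ.stepsFrom j) (x - γ.vert j) := by
  rw [γ.nx_eq_card_filter_Icc x j, nVisits]
  exact congrArg card (filter_congr fun i hi => γ.vert_add_eq_iff j (mem_Icc.mp hi).2 x)

lemma dist1_vert_le_len (j m : ℕ) :
    dist1 (γ.vert j : Fin d → ℤ) (γ.vert m) ≤ γ.len := by
  obtain ⟨i, hi, him⟩ := exists_lt_add_mod_eq_mod γ.len_pos j m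
  have hwalk := (γ.vert_add_eq_iff j hi.le _).mp (γ.vert_eq_of_mod_eq him)
  have hbound := sum_abs_walkPos_le (γ.stepsFrom j) i
  simp only [hwalk, Pi.sub_apply, abs_sub_comm] at hbound
  unfold dist1
  omega

lemma eq_of_walkPos_stepsFrom_eq {γ' : Loop ((lattice d).induce S)} (hlen : γ.len = γ'.len)
    (j : ℕ) (hj : γ.vert j = γ'.vert j)
    (hwalk : walkPos (γ.stepsFrom j) = walkPos (γ'.stepsFrom j)) : γ = γ' := by
  refine γ.ext_vert hlen fun m => ?_
  obtain ⟨i, hi, him⟩ := exists_lt_add_mod_eq_mod γ.len_pos j m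
  rw [← γ.vert_eq_of_mod_eq him, ← γ'.vert_eq_of_mod_eq (hlen ▸ him), Subtype.ext_iff,
    γ.coe_vert_add j hi.le, γ'.coe_vert_add j (hlen ▸ hi.le), hj, hwalk]

lemma prod_nx_eq_visitWeight {M : Type*} [CommMonoid M] [Fintype S] [DecidableEq S]
    (U : ℕ → M) (hU0 : U 0 = 1) (j : ℕ) :
    ∏ x : S, U (γ.nx x) = visitWeight U (γ.stepsFrom j) := by
  set o : Fin d → ℤ := ↑(γ.vert j)
  have hvisited :
      (Icc 1 γ.len).image (walkPos (γ.stepsFrom j)) ⊆ univ.image (fun x : S => x - o) := by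
    simp only [subset_iff, mem_image, mem_Icc, mem_univ, true_and]
    rintro _ ⟨i, ⟨-, hi⟩, rfl⟩
    exact ⟨γ.vert (j + i), by rw [γ.coe_vert_add j hi, add_sub_cancel_left]⟩
  have hunvisited : ∀ z ∉ (Icc 1 γ.len).image (walkPos (γ.stepsFrom j)),
      U (nVisits (γ.stepsFrom j) z) = 1 := by
    intro z hz
    rw [nVisits, card_eq_zero.mpr (filter_eq_empty_iff.mpr fun i hi hiz => hz
      (mem_image.mpr ⟨i, hi, hiz⟩)), hU0]
  simp_rw [γ.nx_eq_nVisits j]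
  rw [visitWeight, prod_subset hvisited fun z _ hz => hunvisited z hz,
    prod_image fun x _ y _ hxy => Subtype.ext (sub_left_inj.mp hxy)]

end Loop

end Encoding

lemma two_mul_pow_mul_chi (U : ℕ → ℝ) (k : ℕ) :
    (2 * d : ℝ) ^ k * chi d U k = ∑ s : Fin k → Fin d × Bool, visitWeight U s := by
  rw [chi, ← mul_assoc]
  rcases eq_or_ne ((2 * d : ℝ) ^ k) 0 with h | h
  · obtain ⟨hd, hk⟩ : d = 0 ∧ k ≠ 0 := by simpa using h
    subst hd
    have : IsEmpty (Fin k → Fin 0 × Bool) := by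
      have : Nonempty (Fin k) := ⟨⟨0, Nat.pos_of_ne_zero hk⟩⟩
      infer_instance
    simp
  · rw [mul_inv_cancel₀ h, one_mul]
    rfl

lemma sum_ofReal_pow_div_mul_visitWeight_le {U : ℕ → ℝ} (hU : ∀ n, 0 ≤ U n) {β : ℝ}
    (hβ : 0 ≤ β) (k : ℕ) :
    ∑ p : Fin k × (Fin k → Fin d × Bool), ENNReal.ofReal (β ^ k / k * visitWeight U p.2) ≤
      ENNReal.ofReal ((2 * d * β) ^ k * chi d U k) := by
  have hprod (s : Fin k → Fin d × Bool) : 0 ≤ visitWeight U s := prod_nonneg fun _ _ => hU _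
  simp only [Fintype.sum_prod_type]
  rw [sum_const, card_univ, Fintype.card_fin,
    ← ENNReal.ofReal_sum_of_nonneg fun s _ => mul_nonneg (by positivity) (hprod s), nsmul_eq_mul,
    ← ENNReal.ofReal_natCast, ← ENNReal.ofReal_mul (by positivity)]
  refine ENNReal.ofReal_le_ofReal ?_
  rw [mul_pow, mul_comm ((2 * d : ℝ) ^ k), mul_assoc, two_mul_pow_mul_chi, ← mul_sum, ← mul_assoc]
  gcongr
  · exact sum_nonneg fun s _ => hprod s
  · rcases k.eq_zero_or_pos with rfl | hk
    · simp
    · rw [mul_div_cancel₀ _ (by positivity)]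

lemma tsum_loopWeight_le {S : Set (Fin d → ℤ)} [Fintype S] [DecidableEq S] {U : ℕ → ℝ}
    (hU : ∀ n, 0 ≤ U n) (hU0 : U 0 = 1) {β : ℝ} (hβ : 0 ≤ β) (o y : S) :
    ∑' γ : {γ : Loop ((lattice d).induce S) // o ∈ γ.val ∧ y ∈ γ.val},
        ENNReal.ofReal (loopWeight U β γ.1) ≤
      ∑' k : ℕ, if dist1 (o : Fin d → ℤ) y ≤ k then
        ENNReal.ofReal ((2 * d * β) ^ k * chi d U k) else 0 := by
  choose j hj hjo using
    fun γ : {γ : Loop ((lattice d).induce S) // o ∈ γ.val ∧ y ∈ γ.val} => γ.1.exists_vert_eq γ.2.1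
  let encode (γ : {γ : Loop ((lattice d).induce S) // o ∈ γ.val ∧ y ∈ γ.val}) :
      Σ k, Fin k × (Fin k → Fin d × Bool) :=
    ⟨γ.1.len, ⟨j γ, hj γ⟩, γ.1.stepsFrom (j γ)⟩
  let g (t : Σ k, Fin k × (Fin k → Fin d × Bool)) : ℝ≥0∞ :=
    if dist1 (o : Fin d → ℤ) y ≤ t.1 then
      ENNReal.ofReal (β ^ t.1 / t.1 * visitWeight U t.2.2)
    else 0
  have hencode : Function.Injective encode := by
    intro γ γ' h
    have hdata := congrArg (fun t => (t.2.1.val, walkPos t.2.2)) h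
    simp only [encode, Prod.mk.injEq] at hdata
    obtain ⟨hjj, hwalk⟩ := hdata
    exact Subtype.ext (γ.1.eq_of_walkPos_stepsFrom_eq (congrArg Sigma.fst h) (j γ)
      (by rw [hjo, hjj, hjo]) (by rw [hwalk, hjj]))
  have hweight (γ : {γ : Loop ((lattice d).induce S) // o ∈ γ.val ∧ y ∈ γ.val}) :
      ENNReal.ofReal (loopWeight U β γ.1) = g (encode γ) := by
    obtain ⟨m, -, hm⟩ := γ.1.exists_vert_eq γ.2.2
    have hdist := γ.1.dist1_vert_le_len (j γ) m
    rw [hjo, hm] at hdist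
    simp only [g, encode, if_pos hdist, loopWeight, γ.1.prod_nx_eq_visitWeight U hU0 (j γ)]
  calc ∑' γ, ENNReal.ofReal (loopWeight U β γ.1)
      = ∑' γ, g (encode γ) := tsum_congr hweight
    _ ≤ ∑' t, g t := ENNReal.tsum_comp_le_tsum_of_injective hencode g
    _ = ∑' k, ∑ p, g ⟨k, p⟩ := by
        rw [ENNReal.tsum_sigma']
        simp_rw [tsum_fintype]
    _ ≤ _ := by
        refine ENNReal.tsum_le_tsum fun k => ?_
        by_cases hk : dist1 (o : Fin d → ℤ) y ≤ k
        · simpa only [g, if_pos hk] using sum_ofReal_pow_div_mul_visitWeight_le hU hβ k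
        · simp [g, hk]

end Lattice

end RWLS

open RWLS in
theorem statement2 (d : ℕ) (N β : ℝ) (hN : 0 < N) (hβ : 0 < β)
    (U : ℕ → ℝ) (hU : Nice U) (K : Finset (Fin d → ℤ)) (o y : Fin d → ℤ)
    (ho : o ∈ K) (hy : y ∈ K) :
    ENNReal.ofReal
        (prob ((lattice d).induce (↑K : Set (Fin d → ℤ))) U N β
          (connEvent ⟨o, by simpa using ho⟩ ⟨y, by simpa using hy⟩))
      ≤ ENNReal.ofReal (N / 2) *
        ∑' k : ℕ, if dist1 o y ≤ k then ENNReal.ofReal ((2 * d * β) ^ k * chi d U k) else 0 := by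
  obtain ⟨hU_nonneg, -, hU0, -, hU_submul⟩ := hU
  exact (ofReal_prob_exists_loop_le hN.le hβ.le hU_nonneg hU_submul _).trans
    (by gcongr; exact tsum_loopWeight_le hU_nonneg hU0 hβ.le _ _)
end

section
/- Let θ>0, n∈ℕ and k∈ℕ₀. Under the Ewens distribution on the symmetric group S_n with parameter θ, the number of fixed points satisfies P^{Ewens}_{θ,n}( |FP(σ)| ≥ k ) ≤ Σ_{j=k}^{∞} max{1,θ}^j / j!. -/
namespace Ewens

/-- The number of cycles of a permutation, counting fixed points as cycles of length one. -/
def cyclesCount {n : ℕ} (σ : Equiv.Perm (Fin n)) : ℕ :=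
  σ.cycleType.card + (Finset.univ.filter fun i => σ i = i).card

/-- The number of fixed points of a permutation of `{1,…,n}`. -/
def fpCount {n : ℕ} (σ : Equiv.Perm (Fin n)) : ℕ :=
  (Finset.univ.filter fun i => σ i = i).card

end Ewens

open Equiv Equiv.Perm Finset Ewens

/-- total number of cycles, counting fixed points -/
def ccount {α : Type*} [Fintype α] [DecidableEq α] (σ : Equiv.Perm α) : ℕ :=
  Multiset.card σ.cycleType + (Fintype.card α - σ.support.card)

theorem ccount_swap_mul {α : Type*} [Fintype α] [DecidableEq α] (f : Equiv.Perm α)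
    (x : α) (hx : f x ≠ x) : ccount (Equiv.swap x (f x) * f) = ccount f + 1 := by
  set g := Equiv.swap x (f x) * f with hg
  by_cases h2 : f (f x) = x
  · have hgx : g x = x := by simp [hg, Equiv.Perm.mul_apply]
    have hgfx : g (f x) = f x := by simp [hg, Equiv.Perm.mul_apply, h2]
    have hfg : Equiv.swap x (f x) * g = f := by
      rw [hg, ← mul_assoc, swap_mul_self, one_mul]
    have hdisj : Equiv.Perm.Disjoint (Equiv.swap x (f x)) g := by
      intro y
      by_cases hy : y = x
      · right; rw [hy, hgx]
      by_cases hy2 : y = f x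
      · right; rw [hy2, hgfx]
      · left; exact Equiv.swap_apply_of_ne_of_ne hy hy2
    have hct : f.cycleType = (Equiv.swap x (f x)).cycleType + g.cycleType := by
      have h := hdisj.cycleType_mul; rw [hfg] at h; exact h
    have hctswap : (Equiv.swap x (f x)).cycleType = {2} := by
      rw [(isCycle_swap (Ne.symm hx)).cycleType, card_support_swap (Ne.symm hx)]
    have hsupp : f.support.card = 2 + g.support.card := by
      rw [← hfg, hdisj.card_support_mul, card_support_swap (Ne.symm hx)]
    have hc1 : Multiset.card f.cycleType = 1 + Multiset.card g.cycleType := by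
      rw [hct, hctswap]; simp [add_comm]
    have hle : f.support.card ≤ Fintype.card α := by
      simpa using Finset.card_le_card (Finset.subset_univ f.support)
    unfold ccount
    omega
  · -- general case: cycle of x has length ≥ 3
    classical
    set c := f.cycleOf x with hc
    set d := c⁻¹ * f with hd
    have hcd : c * d = f := by rw [hd, ← mul_assoc, mul_inv_cancel, one_mul]
    have hcx : c x = f x := f.cycleOf_apply_self x
    have hcyc : c.IsCycle := f.isCycle_cycleOf hx
    have hdisj : Equiv.Perm.Disjoint c d := by
      intro y
      by_cases hsc : f.SameCycle x y
      · right
        rw [hd, Equiv.Perm.mul_apply]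
        have : c (y) = f y := hsc.cycleOf_apply
        rw [← this, Equiv.Perm.coe_inv, Equiv.symm_apply_apply]
      · left; exact cycleOf_apply_of_not_sameCycle hsc
    have hccx : c (c x) ≠ x := by
      rw [hcx, hc, f.cycleOf_apply_apply_self x]; exact h2
    have hcxne : c x ≠ x := by rw [hcx]; exact hx
    set c' := Equiv.swap x (c x) * c with hc'
    have hcyc' : c'.IsCycle := hcyc.swap_mul hcxne hccx
    have hsupc' : c'.support = c.support \ {x} := support_swap_mul_eq c x hccx
    have hgdec : g = c' * d := by
      rw [hg, hc', mul_assoc, hcd, hcx]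
    have hdisj' : Equiv.Perm.Disjoint c' d := by
      rw [disjoint_iff_disjoint_support] at hdisj ⊢
      refine _root_.Disjoint.mono_left ?_ hdisj
      rw [hsupc']; exact Finset.sdiff_subset
    have hctg : Multiset.card g.cycleType = 1 + Multiset.card d.cycleType := by
      rw [hgdec, hdisj'.cycleType_mul, hcyc'.cycleType]; simp [add_comm]
    have hctf : Multiset.card f.cycleType = 1 + Multiset.card d.cycleType := by
      have h := hdisj.cycleType_mul; rw [hcd] at h; rw [h, hcyc.cycleType]; simp [add_comm]
    have hsg : g.support = f.support \ {x} := by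
      rw [hg, ← hcx]
      rw [hcx]
      exact support_swap_mul_eq f x h2
    have hxmem : x ∈ f.support := mem_support.2 hx
    have hcards : g.support.card + 1 = f.support.card := by
      have hpos : 1 ≤ f.support.card := Finset.card_pos.mpr ⟨x, hxmem⟩
      rw [hsg, Finset.card_sdiff_of_subset (Finset.singleton_subset_iff.2 hxmem), Finset.card_singleton]
      omega
    have hle : f.support.card ≤ Fintype.card α := by
      simpa using Finset.card_le_card (Finset.subset_univ f.support)
    unfold ccount
    omega

theorem ccount_extendDomain {α β : Type*} [Fintype α] [DecidableEq α] [Fintype β] [DecidableEq β]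
    {p : β → Prop} [DecidablePred p] (f : α ≃ Subtype p) (g : Equiv.Perm α) :
    ccount (g.extendDomain f) = ccount g + (Fintype.card β - Fintype.card α) := by
  have h1 := Equiv.Perm.cycleType_extendDomain f (g := g)
  have h2 := Equiv.Perm.card_support_extend_domain f (g := g)
  have h3 : g.support.card ≤ Fintype.card α := by
    simpa using Finset.card_le_card (Finset.subset_univ g.support)
  have h4 : Fintype.card α ≤ Fintype.card β := by
    calc Fintype.card α = Fintype.card (Subtype p) := Fintype.card_congr f
    _ ≤ Fintype.card β := Fintype.card_subtype_le p
  unfold ccount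
  rw [h1, h2]
  omega

theorem ccount_permCongr {α β : Type*} [Fintype α] [DecidableEq α] [Fintype β] [DecidableEq β]
    (e : α ≃ β) (g : Equiv.Perm α) : ccount (e.permCongr g) = ccount g := by
  classical
  let f : α ≃ Subtype (fun _ : β => True) := e.trans (Equiv.subtypeUnivEquiv (fun _ => trivial)).symm
  have key : e.permCongr g = g.extendDomain f := by
    ext b
    rw [Equiv.permCongr_apply, Equiv.Perm.extendDomain_apply_subtype g f trivial]
    rfl
  rw [key, ccount_extendDomain f g, Fintype.card_congr e]
  omega

/-- the equiv `Fin n ≃ {y : Fin (n+1) // y ≠ 0}` -/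
def finSuccNeZero (n : ℕ) : Fin n ≃ {y : Fin (n + 1) // y ≠ 0} where
  toFun x := ⟨x.succ, Fin.succ_ne_zero x⟩
  invFun y := (y : Fin (n + 1)).pred y.2
  left_inv x := by simp
  right_inv y := by simp

theorem decomposeFin_zero {n : ℕ} (e : Equiv.Perm (Fin n)) :
    Equiv.Perm.decomposeFin.symm (0, e) = e.extendDomain (finSuccNeZero n) := by
  ext y
  refine Fin.cases ?_ (fun x => ?_) y
  · rw [Equiv.Perm.decomposeFin_symm_apply_zero,
      Equiv.Perm.extendDomain_apply_not_subtype _ _ (by simp)]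
  · have h := Equiv.Perm.extendDomain_apply_subtype e (finSuccNeZero n) (b := x.succ)
      (Fin.succ_ne_zero x)
    rw [Equiv.Perm.decomposeFin_symm_apply_succ, h]
    simp [finSuccNeZero]

theorem ccount_decomposeFin_zero {n : ℕ} (e : Equiv.Perm (Fin n)) :
    ccount (Equiv.Perm.decomposeFin.symm (0, e)) = ccount e + 1 := by
  rw [decomposeFin_zero, ccount_extendDomain]
  simp

theorem ccount_decomposeFin {n : ℕ} (p : Fin (n + 1)) (e : Equiv.Perm (Fin n)) :
    ccount (Equiv.Perm.decomposeFin.symm (p, e)) = ccount e + if p = 0 then 1 else 0 := by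
  by_cases hp : p = 0
  · rw [hp, ccount_decomposeFin_zero]; simp
  · set g := Equiv.Perm.decomposeFin.symm (p, e) with hg
    have hg0 : g 0 = p := Equiv.Perm.decomposeFin_symm_apply_zero p e
    have hkey : Equiv.swap 0 (g 0) * g = Equiv.Perm.decomposeFin.symm (0, e) := by
      ext y
      refine Fin.cases ?_ (fun x => ?_) y
      · simp [hg0, Equiv.Perm.mul_apply]
      · rw [Equiv.Perm.mul_apply, hg0]
        simp [hg, Equiv.Perm.decomposeFin_symm_apply_succ]
    have h1 : ccount (Equiv.swap 0 (g 0) * g) = ccount g + 1 :=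
      ccount_swap_mul g 0 (by rw [hg0]; exact hp)
    rw [hkey, ccount_decomposeFin_zero] at h1
    simp only [hp, if_neg, if_false]
    omega

noncomputable def Zfun (θ : ℝ) (m : ℕ) : ℝ := ∑ σ : Equiv.Perm (Fin m), θ ^ ccount σ

theorem Zfun_pos {θ : ℝ} (hθ : 0 < θ) (m : ℕ) : 0 < Zfun θ m :=
  Finset.sum_pos (fun σ _ => pow_pos hθ _) Finset.univ_nonempty

theorem Zfun_succ (θ : ℝ) (m : ℕ) : Zfun θ (m + 1) = (θ + m) * Zfun θ m := by
  have h := Equiv.sum_comp ((Equiv.Perm.decomposeFin (n := m)).symm)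
    (fun σ : Equiv.Perm (Fin (m + 1)) => θ ^ ccount σ)
  rw [Zfun, ← h, Fintype.sum_prod_type]
  have hterm : ∀ p : Fin (m + 1), ∑ e : Equiv.Perm (Fin m),
      θ ^ ccount (Equiv.Perm.decomposeFin.symm (p, e))
      = (if p = 0 then θ else 1) * Zfun θ m := by
    intro p
    rw [Zfun, Finset.mul_sum]
    refine Finset.sum_congr rfl fun e _ => ?_
    rw [ccount_decomposeFin, pow_add]
    by_cases hp : p = 0 <;> simp [hp, mul_comm]
  rw [Finset.sum_congr rfl (fun p _ => hterm p)]
  rw [← Finset.add_sum_erase _ _ (Finset.mem_univ (0 : Fin (m + 1)))]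
  have : ∀ p ∈ Finset.univ.erase (0 : Fin (m + 1)),
      (if p = 0 then θ else 1) * Zfun θ m = Zfun θ m := by
    intro p hp
    rw [if_neg (Finset.mem_erase.1 hp).1, one_mul]
  rw [Finset.sum_congr rfl this, if_pos rfl, Finset.sum_const,
    Finset.card_erase_of_mem (Finset.mem_univ _)]
  simp [Finset.card_univ]
  ring

theorem Zfun_ge {θ : ℝ} (hθ : 0 < θ) (n : ℕ) :
    ∀ k ≤ n, (n.descFactorial k : ℝ) * (min 1 θ) ^ k * Zfun θ (n - k) ≤ Zfun θ n := by
  intro k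
  induction k with
  | zero => intro _; simp
  | succ k ih =>
    intro hk1
    have hk : k ≤ n := Nat.le_of_succ_le hk1
    refine le_trans ?_ (ih hk)
    obtain ⟨j, hj⟩ : ∃ j, n - k = j + 1 := ⟨n - (k + 1), by omega⟩
    have hnk1 : n - (k + 1) = j := by omega
    rw [hj, hnk1, Zfun_succ]
    have hmin0 : (0:ℝ) ≤ min 1 θ := le_min zero_le_one hθ.le
    have hZ : 0 < Zfun θ j := Zfun_pos hθ j
    rw [Nat.descFactorial_succ]
    push_cast
    have hcast : ((n - k : ℕ) : ℝ) = (j : ℝ) + 1 := by rw [hj]; push_cast; ring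
    rw [hcast]
    have hkey : ((j : ℝ) + 1) * min 1 θ ≤ θ + j := by
      rcases le_total (1:ℝ) θ with h | h
      · rw [min_eq_left h]; linarith
      · rw [min_eq_right h]
        nlinarith [Nat.cast_nonneg (α := ℝ) j]
    calc ((j:ℝ) + 1) * (n.descFactorial k : ℝ) * min 1 θ ^ (k + 1) * Zfun θ j
        = ((n.descFactorial k : ℝ) * min 1 θ ^ k) * ((((j:ℝ) + 1) * min 1 θ) * Zfun θ j) := by
          ring
      _ ≤ ((n.descFactorial k : ℝ) * min 1 θ ^ k) * ((θ + j) * Zfun θ j) := by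
          refine mul_le_mul_of_nonneg_left ?_ (by positivity)
          exact mul_le_mul_of_nonneg_right hkey hZ.le
      _ = (n.descFactorial k : ℝ) * min 1 θ ^ k * ((θ + ↑j) * Zfun θ j) := by ring

theorem sum_fix_S (θ : ℝ) {n k : ℕ} (hk : k ≤ n) (S : Finset (Fin n)) (hS : S.card = k) :
    ∑ σ ∈ Finset.univ.filter (fun σ : Equiv.Perm (Fin n) => ∀ i ∈ S, σ i = i),
      θ ^ ccount σ = θ ^ k * Zfun θ (n - k) := by
  classical
  set p : Fin n → Prop := fun x => x ∉ S with hp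
  have hmem : ∀ σ : Equiv.Perm (Fin n),
      σ ∈ Finset.univ.filter (fun σ : Equiv.Perm (Fin n) => ∀ i ∈ S, σ i = i)
      ↔ (∀ a, ¬p a → σ a = a) := by
    intro σ
    simp [hp, Finset.mem_filter, not_not]
  rw [Finset.sum_subtype _ hmem (fun σ => θ ^ ccount σ)]
  rw [← Equiv.sum_comp (Equiv.Perm.subtypeEquivSubtypePerm p)
    (fun σ : {f : Equiv.Perm (Fin n) // ∀ a, ¬p a → f a = a} => θ ^ ccount (σ : Equiv.Perm (Fin n)))]
  have hcard : Fintype.card (Subtype p) = n - k := by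
    rw [Fintype.card_subtype]
    have : Finset.univ.filter p = Sᶜ := by ext x; simp [hp]
    rw [this, Finset.card_compl, hS]
    simp
  have hofsub : ∀ g : Equiv.Perm (Subtype p),
      ccount (((Equiv.Perm.subtypeEquivSubtypePerm p) g : {f : Equiv.Perm (Fin n) // ∀ a, ¬p a → f a = a}) : Equiv.Perm (Fin n))
        = ccount g + k := by
    intro g
    have hval : (((Equiv.Perm.subtypeEquivSubtypePerm p) g :
        {f : Equiv.Perm (Fin n) // ∀ a, ¬p a → f a = a}) : Equiv.Perm (Fin n))
        = Equiv.Perm.ofSubtype g := rfl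
    rw [hval]
    unfold ccount
    rw [Equiv.Perm.cycleType_ofSubtype, Equiv.Perm.support_ofSubtype, Finset.card_map]
    have hs : g.support.card ≤ Fintype.card (Subtype p) := by
      simpa using Finset.card_le_card (Finset.subset_univ g.support)
    rw [hcard] at hs ⊢
    simp only [Fintype.card_fin]
    omega
  simp_rw [hofsub]
  have hEq : ∑ g : Equiv.Perm (Subtype p), θ ^ ccount g = Zfun θ (n - k) := by
    have e : Subtype p ≃ Fin (n - k) := Fintype.equivFinOfCardEq hcard
    rw [Zfun, ← Equiv.sum_comp (Equiv.permCongr e)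
      (fun σ : Equiv.Perm (Fin (n - k)) => θ ^ ccount σ)]
    exact Finset.sum_congr rfl fun g _ => by rw [ccount_permCongr]
  rw [← hEq, Finset.mul_sum]
  exact Finset.sum_congr rfl fun g _ => by rw [pow_add, mul_comm]

theorem fp_card {n : ℕ} (σ : Equiv.Perm (Fin n)) : fpCount σ = n - σ.support.card := by
  have h := Finset.card_filter_add_card_filter_not
    (s := (Finset.univ : Finset (Fin n))) (p := fun i => σ i = i)
  have hsupp : σ.support = Finset.univ.filter (fun x => ¬ σ x = x) := rfl
  rw [← hsupp, Finset.card_univ, Fintype.card_fin] at h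
  unfold fpCount
  omega

theorem cyclesCount_eq {n : ℕ} (σ : Equiv.Perm (Fin n)) : cyclesCount σ = ccount σ := by
  have h1 : fpCount σ = n - σ.support.card := fp_card σ
  unfold cyclesCount ccount
  unfold fpCount at h1
  rw [h1, Fintype.card_fin]

theorem fpCount_le {n : ℕ} (σ : Equiv.Perm (Fin n)) : fpCount σ ≤ n := by
  have := fp_card σ; omega

theorem numer_le (θ : ℝ) (hθ : 0 < θ) {n k : ℕ} (hk : k ≤ n) :
    ∑ σ ∈ Finset.univ.filter (fun σ : Equiv.Perm (Fin n) => k ≤ fpCount σ), θ ^ ccount σ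
      ≤ (n.choose k : ℝ) * θ ^ k * Zfun θ (n - k) := by
  classical
  have hswap :
      ∑ σ : Equiv.Perm (Fin n), ∑ S ∈ Finset.powersetCard k (Finset.univ.filter fun i => σ i = i),
          θ ^ ccount σ
      = ∑ S ∈ Finset.powersetCard k (Finset.univ : Finset (Fin n)),
          ∑ σ ∈ Finset.univ.filter (fun σ : Equiv.Perm (Fin n) => ∀ i ∈ S, σ i = i),
          θ ^ ccount σ := by
    refine Finset.sum_comm' ?_
    intro σ S
    simp only [Finset.mem_univ, true_and, Finset.mem_powersetCard, Finset.mem_filter,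
      Finset.subset_univ, Finset.subset_iff, and_true]
    tauto
  have step1 :
      ∑ σ ∈ Finset.univ.filter (fun σ : Equiv.Perm (Fin n) => k ≤ fpCount σ), θ ^ ccount σ
      ≤ ∑ σ : Equiv.Perm (Fin n), ((fpCount σ).choose k : ℝ) * θ ^ ccount σ := by
    refine le_trans (Finset.sum_le_sum (fun σ hσ => ?_)) (Finset.sum_le_sum_of_subset_of_nonneg
      (Finset.subset_univ _) (fun σ _ _ => by positivity))
    have hσk : k ≤ fpCount σ := (Finset.mem_filter.1 hσ).2
    have h1 : (1 : ℝ) ≤ ((fpCount σ).choose k : ℝ) := by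
      exact_mod_cast Nat.succ_le_of_lt (Nat.choose_pos hσk)
    nlinarith [pow_pos hθ (ccount σ)]
  have step2 : ∀ σ : Equiv.Perm (Fin n),
      ((fpCount σ).choose k : ℝ) * θ ^ ccount σ
      = ∑ S ∈ Finset.powersetCard k (Finset.univ.filter fun i => σ i = i), θ ^ ccount σ := by
    intro σ
    rw [Finset.sum_const, Finset.card_powersetCard, nsmul_eq_mul]
    rfl
  calc ∑ σ ∈ Finset.univ.filter (fun σ : Equiv.Perm (Fin n) => k ≤ fpCount σ), θ ^ ccount σ
      ≤ ∑ σ : Equiv.Perm (Fin n), ((fpCount σ).choose k : ℝ) * θ ^ ccount σ := step1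
    _ = ∑ S ∈ Finset.powersetCard k (Finset.univ : Finset (Fin n)),
          ∑ σ ∈ Finset.univ.filter (fun σ : Equiv.Perm (Fin n) => ∀ i ∈ S, σ i = i),
          θ ^ ccount σ := by rw [← hswap]; exact Finset.sum_congr rfl fun σ _ => step2 σ
    _ = ∑ S ∈ Finset.powersetCard k (Finset.univ : Finset (Fin n)), θ ^ k * Zfun θ (n - k) := by
        refine Finset.sum_congr rfl fun S hS => ?_
        exact sum_fix_S θ hk S (Finset.mem_powersetCard.1 hS).2
    _ = (n.choose k : ℝ) * θ ^ k * Zfun θ (n - k) := by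
        rw [Finset.sum_const, Finset.card_powersetCard, Finset.card_univ, Fintype.card_fin,
          nsmul_eq_mul]
        ring

theorem tail_ge (θ : ℝ) (k : ℕ) :
    (max 1 θ) ^ k / (Nat.factorial k : ℝ)
      ≤ ∑' j : ℕ, (max 1 θ) ^ (j + k) / (Nat.factorial (j + k) : ℝ) := by
  have hM : (0:ℝ) ≤ max 1 θ := le_trans zero_le_one (le_max_left _ _)
  have hsum : Summable (fun j : ℕ => (max 1 θ) ^ (j + k) / (Nat.factorial (j + k) : ℝ)) := by
    have := (Real.summable_pow_div_factorial (max 1 θ)).comp_injective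
      (add_left_injective k)
    exact this
  have := Summable.le_tsum hsum 0 (fun j _ => by positivity)
  simpa using this

open Ewens in
/-- Under the Ewens distribution with parameter `θ > 0` on `S_n`, the number of fixed points
has a Poisson-like tail: `P(|FP(σ)| ≥ k) ≤ Σ_{j≥k} max{1,θ}^j / j!`. -/
theorem statement13 (θ : ℝ) (hθ : 0 < θ) (n : ℕ) (hn : 1 ≤ n) (k : ℕ) :
    (∑ σ ∈ Finset.univ.filter (fun σ : Equiv.Perm (Fin n) => k ≤ fpCount σ),
        θ ^ cyclesCount σ) / (∑ σ : Equiv.Perm (Fin n), θ ^ cyclesCount σ)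
      ≤ ∑' j : ℕ, (max 1 θ) ^ (j + k) / (Nat.factorial (j + k) : ℝ) := by
  have hM : (0:ℝ) ≤ max 1 θ := le_trans zero_le_one (le_max_left _ _)
  have htail := tail_ge θ k
  have hZ : (∑ σ : Equiv.Perm (Fin n), θ ^ cyclesCount σ) = Zfun θ n := by
    rw [Zfun]; exact Finset.sum_congr rfl fun σ _ => by rw [cyclesCount_eq]
  have hNum : (∑ σ ∈ Finset.univ.filter (fun σ : Equiv.Perm (Fin n) => k ≤ fpCount σ),
      θ ^ cyclesCount σ)
      = ∑ σ ∈ Finset.univ.filter (fun σ : Equiv.Perm (Fin n) => k ≤ fpCount σ),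
      θ ^ ccount σ :=
    Finset.sum_congr rfl fun σ _ => by rw [cyclesCount_eq]
  rw [hZ, hNum]
  have hZpos := Zfun_pos hθ n
  by_cases hk : k ≤ n
  · refine le_trans ?_ htail
    rw [div_le_iff₀ hZpos]
    refine le_trans (numer_le θ hθ hk) ?_
    have hge := Zfun_ge hθ n k hk
    have hfac : (0:ℝ) < (Nat.factorial k : ℝ) := by exact_mod_cast Nat.factorial_pos k
    have hmaxmin : max 1 θ * min 1 θ = θ := by rw [max_mul_min]; ring
    have hdesc : (n.descFactorial k : ℝ) = (Nat.factorial k : ℝ) * (n.choose k : ℝ) := by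
      exact_mod_cast Nat.descFactorial_eq_factorial_mul_choose n k
    have hθsplit : θ ^ k = (max 1 θ) ^ k * (min 1 θ) ^ k := by
      rw [← mul_pow, hmaxmin]
    calc (n.choose k : ℝ) * θ ^ k * Zfun θ (n - k)
        = (max 1 θ) ^ k / (Nat.factorial k : ℝ) *
            ((n.descFactorial k : ℝ) * (min 1 θ) ^ k * Zfun θ (n - k)) := by
          rw [hdesc, hθsplit]; field_simp
      _ ≤ (max 1 θ) ^ k / (Nat.factorial k : ℝ) * Zfun θ n := by
          refine mul_le_mul_of_nonneg_left hge (by positivity)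
  · have hempty : Finset.univ.filter (fun σ : Equiv.Perm (Fin n) => k ≤ fpCount σ) = ∅ := by
      refine Finset.filter_eq_empty_iff.2 fun σ _ => ?_
      have := fpCount_le σ
      omega
    rw [hempty, Finset.sum_empty, zero_div]
    refine le_trans ?_ htail
    positivity
end

section
/- Let (Ω,𝓕,P) be a probability space, let A∈𝓕, let X,Y be measurable random variables with X>0 and Y>0 almost surely, and let m∈ℕ. Assume that 1_A/(XY), X^{2^m} and Y^{2^m} are integrable. Then P(A) ≤ E[1_A/(XY)]^{1/2} · P(A)^{1/2 − 2^{−m}} · E[X^{2^m}]^{2^{−(m+1)}} · E[Y^{2^m}]^{2^{−(m+1)}}. -/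
open MeasureTheory


lemma cs_aux {Ω : Type*} [MeasurableSpace Ω] (μ : Measure Ω) {f g : Ω → ℝ}
    (hf0 : 0 ≤ᵐ[μ] f) (hg0 : 0 ≤ᵐ[μ] g)
    (hfm : AEStronglyMeasurable f μ) (hgm : AEStronglyMeasurable g μ)
    (hf2 : Integrable (fun x => f x ^ 2) μ) (hg2 : Integrable (fun x => g x ^ 2) μ) :
    ∫ x, f x * g x ∂μ ≤
      (∫ x, f x ^ 2 ∂μ) ^ ((1:ℝ)/2) * (∫ x, g x ^ 2 ∂μ) ^ ((1:ℝ)/2) := by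
  have hpq : Real.HolderConjugate 2 2 := ⟨by norm_num, by norm_num, by norm_num⟩
  have hf : MemLp f (ENNReal.ofReal 2) μ := by
    rw [show ENNReal.ofReal 2 = 2 by norm_num]
    exact (memLp_two_iff_integrable_sq hfm).2 hf2
  have hg : MemLp g (ENNReal.ofReal 2) μ := by
    rw [show ENNReal.ofReal 2 = 2 by norm_num]
    exact (memLp_two_iff_integrable_sq hgm).2 hg2
  have h := integral_mul_le_Lp_mul_Lq_of_nonneg hpq hf0 hg0 hf hg
  have e : ∀ x : ℝ, x ^ (2:ℝ) = x ^ 2 := fun x => by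
    rw [show (2:ℝ) = ((2:ℕ):ℝ) by norm_num, Real.rpow_natCast]
  simp only [e] at h
  convert h using 2 <;> norm_num

/-- Integrability of lower powers of a positive variable. -/
lemma pow_int {Ω : Type*} [MeasurableSpace Ω] (P : Measure Ω) [IsProbabilityMeasure P]
    {X : Ω → ℝ} (hX : Measurable X) (hXpos : ∀ᵐ ω ∂P, 0 < X ω) {N : ℕ}
    (hN : Integrable (fun ω => X ω ^ N) P) {j : ℕ} (hj : j ≤ N) :
    Integrable (fun ω => X ω ^ j) P := by
  refine Integrable.mono ((integrable_const (1:ℝ)).add hN)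
    (hX.pow_const j).aestronglyMeasurable ?_
  filter_upwards [hXpos] with ω hω
  have h1 : (0:ℝ) ≤ X ω ^ N := le_of_lt (pow_pos hω N)
  simp only [Pi.add_apply]
  rw [Real.norm_of_nonneg (le_of_lt (pow_pos hω j)), Real.norm_of_nonneg (by norm_num; linarith)]
  rcases le_or_gt (X ω) 1 with h | h
  · have := pow_le_one₀ (le_of_lt hω) h (n := j); linarith
  · have := pow_le_pow_right₀ (le_of_lt h) hj; linarith

/-- Iterated Cauchy–Schwarz. -/
lemma iter_cs {Ω : Type*} [MeasurableSpace Ω] (P : Measure Ω) [IsProbabilityMeasure P]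
    {A : Set Ω} (hA : MeasurableSet A) {X : Ω → ℝ} (hX : Measurable X)
    (hXpos : ∀ᵐ ω ∂P, 0 < X ω) :
    ∀ (n k : ℕ), Integrable (fun ω => X ω ^ (2 ^ (k + n))) P →
      (∫ ω, A.indicator (fun ω' => X ω' ^ (2 ^ k)) ω ∂P) ≤
        (P A).toReal ^ (1 - (2:ℝ) ^ (-(n:ℝ))) *
          (∫ ω, X ω ^ (2 ^ (k + n)) ∂P) ^ ((2:ℝ) ^ (-(n:ℝ))) := by
  intro n
  induction n with
  | zero =>
    intro k hint
    simp only [Nat.add_zero, Nat.cast_zero, neg_zero, Real.rpow_zero, sub_self, Real.rpow_one,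
      one_mul]
    refine integral_mono_ae (hint.indicator hA) hint ?_
    filter_upwards [hXpos] with ω hω
    by_cases hω' : ω ∈ A
    · simp [Set.indicator_of_mem hω']
    · simp [Set.indicator_of_notMem hω', le_of_lt (pow_pos hω _)]
  | succ n ih =>
    intro k hint
    have ha : (0:ℝ) ≤ (P A).toReal := ENNReal.toReal_nonneg
    have hD : (0:ℝ) ≤ ∫ ω, X ω ^ (2 ^ (k + (n+1))) ∂P :=
      integral_nonneg_of_ae (by filter_upwards [hXpos] with ω hω; positivity)
    have hint' : Integrable (fun ω => X ω ^ (2 ^ ((k+1) + n))) P := by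
      simpa [show (k+1)+n = k+(n+1) from by omega] using hint
    have hintk1 : Integrable (fun ω => X ω ^ (2 ^ (k+1))) P :=
      pow_int P hX hXpos hint (Nat.pow_le_pow_right (by norm_num) (by omega))
    set f : Ω → ℝ := fun ω => Real.sqrt (A.indicator (1 : Ω → ℝ) ω) with hf_def
    set g : Ω → ℝ := fun ω => Real.sqrt (A.indicator (fun ω' => X ω' ^ (2^(k+1))) ω) with hg_def
    have hfm : AEStronglyMeasurable f P :=
      (Real.continuous_sqrt.measurable.comp
        (measurable_const.indicator hA)).aestronglyMeasurable
    have hgm : AEStronglyMeasurable g P :=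
      (Real.continuous_sqrt.measurable.comp
        ((hX.pow_const _).indicator hA)).aestronglyMeasurable
    have hf2 : (fun ω => f ω ^ 2) = fun ω => A.indicator (1 : Ω → ℝ) ω :=
      funext fun ω => Real.sq_sqrt (Set.indicator_nonneg (fun _ _ => zero_le_one) ω)
    have hg2 : ∀ᵐ ω ∂P, g ω ^ 2 = A.indicator (fun ω' => X ω' ^ (2^(k+1))) ω := by
      filter_upwards [hXpos] with ω hω
      refine Real.sq_sqrt ?_
      by_cases hωA : ω ∈ A
      · simp [Set.indicator_of_mem hωA]; positivity
      · simp [Set.indicator_of_notMem hωA]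
    have hfg : ∀ᵐ ω ∂P, f ω * g ω = A.indicator (fun ω' => X ω' ^ (2^k)) ω := by
      filter_upwards [hXpos] with ω hω
      by_cases hωA : ω ∈ A
      · simp only [hf_def, hg_def, Set.indicator_of_mem hωA, Pi.one_apply, Real.sqrt_one,
          one_mul]
        rw [show 2^(k+1) = 2^k * 2 from by ring, pow_mul, Real.sqrt_sq (by positivity)]
      · simp [hf_def, hg_def, Set.indicator_of_notMem hωA]
    have hf2i : Integrable (fun ω => f ω ^ 2) P := by
      rw [hf2]; exact (integrable_const (1:ℝ)).indicator hA
    have hg2i : Integrable (fun ω => g ω ^ 2) P :=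
      (hintk1.indicator hA).congr (hg2.mono fun ω h => h.symm)
    have hCS := cs_aux P
      (Filter.Eventually.of_forall fun ω => Real.sqrt_nonneg _)
      (Filter.Eventually.of_forall fun ω => Real.sqrt_nonneg _) hfm hgm hf2i hg2i
    have hIf : ∫ ω, f ω ^ 2 ∂P = (P A).toReal := by
      rw [hf2]; exact integral_indicator_one hA
    have hIg : ∫ ω, g ω ^ 2 ∂P = ∫ ω, A.indicator (fun ω' => X ω' ^ (2^(k+1))) ω ∂P :=
      integral_congr_ae hg2
    have hmain : (∫ ω, A.indicator (fun ω' => X ω' ^ (2^k)) ω ∂P) ≤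
        (P A).toReal ^ ((1:ℝ)/2) *
          (∫ ω, A.indicator (fun ω' => X ω' ^ (2^(k+1))) ω ∂P) ^ ((1:ℝ)/2) := by
      rw [← integral_congr_ae hfg, ← hIf, ← hIg]; exact hCS
    have hih := ih (k+1) hint'
    rw [show (k+1)+n = k+(n+1) from by omega] at hih
    have hstep : (∫ ω, A.indicator (fun ω' => X ω' ^ (2^k)) ω ∂P) ≤
        (P A).toReal ^ ((1:ℝ)/2) *
          ((P A).toReal ^ (1 - (2:ℝ) ^ (-(n:ℝ))) *
            (∫ ω, X ω ^ (2 ^ (k + (n+1))) ∂P) ^ ((2:ℝ) ^ (-(n:ℝ)))) ^ ((1:ℝ)/2) := by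
      refine hmain.trans (mul_le_mul_of_nonneg_left ?_ (Real.rpow_nonneg ha _))
      refine Real.rpow_le_rpow ?_ hih (by norm_num)
      refine integral_nonneg_of_ae ?_
      filter_upwards [hXpos] with ω hω
      by_cases hωA : ω ∈ A
      · simp only [Set.indicator_of_mem hωA]; positivity
      · simp [Set.indicator_of_notMem hωA]
    refine hstep.trans_eq ?_
    have h2 : (2:ℝ) ^ (-((n:ℝ)+1)) = (2:ℝ) ^ (-(n:ℝ)) * (1/2) := by
      rw [show -((n:ℝ)+1) = -(n:ℝ) + (-1) from by ring,
        Real.rpow_add (by norm_num), Real.rpow_neg_one]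
      norm_num
    rw [Real.mul_rpow (Real.rpow_nonneg ha _) (Real.rpow_nonneg hD _),
      ← Real.rpow_mul ha, ← Real.rpow_mul hD, ← mul_assoc,
      ← Real.rpow_add' ha ?_]
    · push_cast
      rw [h2]
      ring_nf
    · have ht : (2:ℝ) ^ (-(n:ℝ)) ≤ 1 :=
        Real.rpow_le_one_of_one_le_of_nonpos one_le_two (by simp)
      nlinarith

lemma alg_aux (a0 D1 D2 : ℝ) (ha0 : 0 < a0) (hD1 : 0 < D1) (hD2 : 0 < D2) (n : ℕ) :
    ((a0 ^ (1 - (2:ℝ)^(-(n:ℝ))) * D1 ^ ((2:ℝ)^(-(n:ℝ)))) ^ ((1:ℝ)/2) *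
      (a0 ^ (1 - (2:ℝ)^(-(n:ℝ))) * D2 ^ ((2:ℝ)^(-(n:ℝ)))) ^ ((1:ℝ)/2)) ^ ((1:ℝ)/2) =
    a0 ^ ((1:ℝ)/2 - (2:ℝ)^(-((n:ℝ)+1))) * D1 ^ ((2:ℝ)^(-((n:ℝ)+1+1))) *
      D2 ^ ((2:ℝ)^(-((n:ℝ)+1+1))) := by
  have ha' := ha0.le
  have h1' := hD1.le
  have h2' := hD2.le
  have e1 : (2:ℝ) ^ (-((n:ℝ)+1)) = (2:ℝ) ^ (-(n:ℝ)) / 2 := by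
    rw [show -((n:ℝ)+1) = -(n:ℝ) + (-1) from by ring, Real.rpow_add (by norm_num),
      Real.rpow_neg_one]
    ring
  have e2 : (2:ℝ) ^ (-((n:ℝ)+1+1)) = (2:ℝ) ^ (-(n:ℝ)) / 4 := by
    rw [show -((n:ℝ)+1+1) = -(n:ℝ) + (-2) from by ring, Real.rpow_add (by norm_num),
      show ((-2:ℝ)) = ((-2:ℤ):ℝ) from by norm_num, Real.rpow_intCast]
    norm_num
    ring
  rw [Real.mul_rpow (Real.rpow_nonneg ha' _) (Real.rpow_nonneg h1' _),
    Real.mul_rpow (Real.rpow_nonneg ha' _) (Real.rpow_nonneg h2' _),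
    ← Real.rpow_mul ha', ← Real.rpow_mul h1', ← Real.rpow_mul h2',
    mul_mul_mul_comm, ← Real.rpow_add ha0,
    Real.mul_rpow (Real.rpow_nonneg ha' _)
      (mul_nonneg (Real.rpow_nonneg h1' _) (Real.rpow_nonneg h2' _)),
    Real.mul_rpow (Real.rpow_nonneg h1' _) (Real.rpow_nonneg h2' _),
    ← Real.rpow_mul ha', ← Real.rpow_mul h1', ← Real.rpow_mul h2', ← mul_assoc]
  congr 1
  · congr 1
    · rw [e1]; ring
    · rw [e2]; ring
  · rw [e2]; ring


/-- Iterated Cauchy–Schwarz bound: for an event `A` and positive random variables `X, Y`,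
`P(A) ≤ E[1_A/(XY)]^{1/2} · P(A)^{1/2 − 2^{−m}} · E[X^{2^m}]^{2^{−(m+1)}} ·
E[Y^{2^m}]^{2^{−(m+1)}}`. -/
theorem statement16 {Ω : Type*} [MeasurableSpace Ω] (P : Measure Ω) [IsProbabilityMeasure P]
    (A : Set Ω) (hA : MeasurableSet A) (X Y : Ω → ℝ) (hX : Measurable X) (hY : Measurable Y)
    (hXpos : ∀ᵐ ω ∂P, 0 < X ω) (hYpos : ∀ᵐ ω ∂P, 0 < Y ω) (m : ℕ) (hm : 1 ≤ m)
    (h1 : Integrable (fun ω => A.indicator (fun ω' => 1 / (X ω' * Y ω')) ω) P)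
    (h2 : Integrable (fun ω => X ω ^ (2 ^ m)) P)
    (h3 : Integrable (fun ω => Y ω ^ (2 ^ m)) P) :
    (P A).toReal ≤
      (∫ ω, A.indicator (fun ω' => 1 / (X ω' * Y ω')) ω ∂P) ^ ((1 : ℝ) / 2) *
        (P A).toReal ^ ((1 : ℝ) / 2 - (2 : ℝ) ^ (-(m : ℝ))) *
        (∫ ω, X ω ^ (2 ^ m) ∂P) ^ ((2 : ℝ) ^ (-((m : ℝ) + 1))) *
        (∫ ω, Y ω ^ (2 ^ m) ∂P) ^ ((2 : ℝ) ^ (-((m : ℝ) + 1))) := by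
  have hB0 : 0 ≤ ∫ ω, A.indicator (fun ω' => 1 / (X ω' * Y ω')) ω ∂P := by
    refine integral_nonneg_of_ae ?_
    filter_upwards [hXpos, hYpos] with ω hx hy
    by_cases hωA : ω ∈ A
    · simp only [Set.indicator_of_mem hωA]; positivity
    · simp [Set.indicator_of_notMem hωA]
  have hDX0 : 0 ≤ ∫ ω, X ω ^ (2 ^ m) ∂P :=
    integral_nonneg_of_ae (by filter_upwards [hXpos] with ω hω; positivity)
  have hDY0 : 0 ≤ ∫ ω, Y ω ^ (2 ^ m) ∂P :=
    integral_nonneg_of_ae (by filter_upwards [hYpos] with ω hω; positivity)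
  by_cases hPA : P A = 0
  · have : (P A).toReal = 0 := by simp [hPA]
    rw [this]
    exact mul_nonneg (mul_nonneg (mul_nonneg (Real.rpow_nonneg hB0 _)
      (Real.rpow_nonneg le_rfl _)) (Real.rpow_nonneg hDX0 _)) (Real.rpow_nonneg hDY0 _)
  have hPApos : 0 < (P A).toReal := ENNReal.toReal_pos hPA (measure_ne_top P A)
  have ha : (0:ℝ) ≤ (P A).toReal := hPApos.le
  obtain ⟨n, rfl⟩ : ∃ n, m = n + 1 := ⟨m - 1, by omega⟩
  -- integrability of squares and product
  have hX2 : Integrable (fun ω => X ω ^ 2) P :=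
    pow_int P hX hXpos h2 (by calc (2:ℕ) = 2^1 := by norm_num
                                _ ≤ 2^(n+1) := Nat.pow_le_pow_right (by norm_num) (by omega))
  have hY2 : Integrable (fun ω => Y ω ^ 2) P :=
    pow_int P hY hYpos h3 (by calc (2:ℕ) = 2^1 := by norm_num
                                _ ≤ 2^(n+1) := Nat.pow_le_pow_right (by norm_num) (by omega))
  have hXY : Integrable (fun ω => X ω * Y ω) P := by
    refine Integrable.mono (hX2.add hY2) (hX.mul hY).aestronglyMeasurable ?_
    filter_upwards with ω
    simp only [Pi.add_apply, Real.norm_eq_abs]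
    rw [abs_of_nonneg (by positivity : (0:ℝ) ≤ X ω ^ 2 + Y ω ^ 2)]
    have h := abs_mul (X ω) (Y ω)
    nlinarith [sq_nonneg (|X ω| - |Y ω|), sq_abs (X ω), sq_abs (Y ω),
      abs_nonneg (X ω), abs_nonneg (Y ω), abs_nonneg (X ω * Y ω)]
  -- Step 1: Cauchy-Schwarz with 1/(XY) and XY
  have step1 : (P A).toReal ≤
      (∫ ω, A.indicator (fun ω' => 1 / (X ω' * Y ω')) ω ∂P) ^ ((1:ℝ)/2) *
        (∫ ω, A.indicator (fun ω' => X ω' * Y ω') ω ∂P) ^ ((1:ℝ)/2) := by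
    set f : Ω → ℝ := fun ω => Real.sqrt (A.indicator (fun ω' => 1 / (X ω' * Y ω')) ω) with hf_def
    set g : Ω → ℝ := fun ω => Real.sqrt (A.indicator (fun ω' => X ω' * Y ω') ω) with hg_def
    have hfm : AEStronglyMeasurable f P :=
      (Real.continuous_sqrt.measurable.comp
        (((hX.mul hY).const_div 1).indicator hA)).aestronglyMeasurable
    have hgm : AEStronglyMeasurable g P :=
      (Real.continuous_sqrt.measurable.comp ((hX.mul hY).indicator hA)).aestronglyMeasurable
    have hf2 : ∀ᵐ ω ∂P, f ω ^ 2 = A.indicator (fun ω' => 1 / (X ω' * Y ω')) ω := by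
      filter_upwards [hXpos, hYpos] with ω hx hy
      refine Real.sq_sqrt ?_
      by_cases hωA : ω ∈ A
      · simp only [Set.indicator_of_mem hωA]; positivity
      · simp [Set.indicator_of_notMem hωA]
    have hg2 : ∀ᵐ ω ∂P, g ω ^ 2 = A.indicator (fun ω' => X ω' * Y ω') ω := by
      filter_upwards [hXpos, hYpos] with ω hx hy
      refine Real.sq_sqrt ?_
      by_cases hωA : ω ∈ A
      · simp only [Set.indicator_of_mem hωA]; positivity
      · simp [Set.indicator_of_notMem hωA]
    have hfg : ∀ᵐ ω ∂P, f ω * g ω = A.indicator (1 : Ω → ℝ) ω := by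
      filter_upwards [hXpos, hYpos] with ω hx hy
      by_cases hωA : ω ∈ A
      · simp only [hf_def, hg_def, Set.indicator_of_mem hωA, Pi.one_apply]
        rw [← Real.sqrt_mul (by positivity), one_div_mul_cancel (by positivity : X ω * Y ω ≠ 0),
          Real.sqrt_one]
      · simp [hf_def, hg_def, Set.indicator_of_notMem hωA]
    have hf2i : Integrable (fun ω => f ω ^ 2) P := h1.congr (hf2.mono fun ω h => h.symm)
    have hg2i : Integrable (fun ω => g ω ^ 2) P :=
      (hXY.indicator hA).congr (hg2.mono fun ω h => h.symm)
    have hCS := cs_aux P (Filter.Eventually.of_forall fun ω => Real.sqrt_nonneg _)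
      (Filter.Eventually.of_forall fun ω => Real.sqrt_nonneg _) hfm hgm hf2i hg2i
    rw [integral_congr_ae hfg, integral_congr_ae hf2, integral_congr_ae hg2,
      integral_indicator_one hA] at hCS
    exact hCS
  -- Step 2: Cauchy-Schwarz splitting XY into X² and Y²
  have step2 : (∫ ω, A.indicator (fun ω' => X ω' * Y ω') ω ∂P) ≤
      (∫ ω, A.indicator (fun ω' => X ω' ^ 2) ω ∂P) ^ ((1:ℝ)/2) *
        (∫ ω, A.indicator (fun ω' => Y ω' ^ 2) ω ∂P) ^ ((1:ℝ)/2) := by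
    set f : Ω → ℝ := fun ω => Real.sqrt (A.indicator (fun ω' => X ω' ^ 2) ω) with hf_def
    set g : Ω → ℝ := fun ω => Real.sqrt (A.indicator (fun ω' => Y ω' ^ 2) ω) with hg_def
    have hfm : AEStronglyMeasurable f P :=
      (Real.continuous_sqrt.measurable.comp ((hX.pow_const 2).indicator hA)).aestronglyMeasurable
    have hgm : AEStronglyMeasurable g P :=
      (Real.continuous_sqrt.measurable.comp ((hY.pow_const 2).indicator hA)).aestronglyMeasurable
    have hf2 : ∀ᵐ ω ∂P, f ω ^ 2 = A.indicator (fun ω' => X ω' ^ 2) ω :=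
      Filter.Eventually.of_forall fun ω => Real.sq_sqrt
        (Set.indicator_nonneg (fun x _ => sq_nonneg _) ω)
    have hg2 : ∀ᵐ ω ∂P, g ω ^ 2 = A.indicator (fun ω' => Y ω' ^ 2) ω :=
      Filter.Eventually.of_forall fun ω => Real.sq_sqrt
        (Set.indicator_nonneg (fun x _ => sq_nonneg _) ω)
    have hfg : ∀ᵐ ω ∂P, f ω * g ω = A.indicator (fun ω' => X ω' * Y ω') ω := by
      filter_upwards [hXpos, hYpos] with ω hx hy
      by_cases hωA : ω ∈ A
      · simp only [hf_def, hg_def, Set.indicator_of_mem hωA]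
        rw [Real.sqrt_sq hx.le, Real.sqrt_sq hy.le]
      · simp [hf_def, hg_def, Set.indicator_of_notMem hωA]
    have hf2i : Integrable (fun ω => f ω ^ 2) P :=
      (hX2.indicator hA).congr (hf2.mono fun ω h => h.symm)
    have hg2i : Integrable (fun ω => g ω ^ 2) P :=
      (hY2.indicator hA).congr (hg2.mono fun ω h => h.symm)
    have hCS := cs_aux P (Filter.Eventually.of_forall fun ω => Real.sqrt_nonneg _)
      (Filter.Eventually.of_forall fun ω => Real.sqrt_nonneg _) hfm hgm hf2i hg2i
    rw [integral_congr_ae hfg, integral_congr_ae hf2, integral_congr_ae hg2] at hCS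
    exact hCS
  -- Step 3: iterate on X² and Y²
  have hintX : Integrable (fun ω => X ω ^ (2 ^ (1 + n))) P := by
    simpa [show 1 + n = n + 1 from by omega] using h2
  have hintY : Integrable (fun ω => Y ω ^ (2 ^ (1 + n))) P := by
    simpa [show 1 + n = n + 1 from by omega] using h3
  have iterX := iter_cs P hA hX hXpos n 1 hintX
  have iterY := iter_cs P hA hY hYpos n 1 hintY
  rw [show (1:ℕ) + n = n + 1 from by omega] at iterX iterY
  norm_num at iterX iterY
  -- positivity of the moment integrals
  have hsupp : ∀ (Z : Ω → ℝ), Measurable Z → (∀ᵐ ω ∂P, 0 < Z ω) →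
      Integrable (fun ω => Z ω ^ (2^(n+1))) P → 0 < ∫ ω, Z ω ^ (2^(n+1)) ∂P := by
    intro Z hZ hZpos hZint
    refine (integral_pos_iff_support_of_nonneg_ae ?_ hZint).2 ?_
    · filter_upwards [hZpos] with ω hω; positivity
    · have hmem : ∀ᵐ ω ∂P, ω ∈ Function.support fun ω' => Z ω' ^ (2^(n+1)) := by
        filter_upwards [hZpos] with ω hω
        simp only [Function.mem_support]
        positivity
      by_contra h
      push_neg at h
      have h0 : P (Function.support fun ω' => Z ω' ^ (2^(n+1))) = 0 := le_antisymm h bot_le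
      have hc : P (Function.support fun ω' => Z ω' ^ (2^(n+1)))ᶜ = 0 := by
        rw [measure_eq_zero_iff_ae_notMem]
        filter_upwards [hZpos] with ω hω
        simp only [Set.notMem_compl_iff, Function.mem_support]
        positivity
      have huniv : P Set.univ ≤ 0 := by
        rw [← Set.union_compl_self (Function.support fun ω' => Z ω' ^ (2^(n+1)))]
        calc P _ ≤ _ := measure_union_le _ _
          _ = 0 := by rw [h0, hc, add_zero]
      simp at huniv
  have hD1pos : 0 < ∫ ω, X ω ^ (2^(n+1)) ∂P := hsupp X hX hXpos h2
  have hD2pos : 0 < ∫ ω, Y ω ^ (2^(n+1)) ∂P := hsupp Y hY hYpos h3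
  have hC0 : 0 ≤ ∫ ω, A.indicator (fun ω' => X ω' * Y ω') ω ∂P := by
    refine integral_nonneg_of_ae ?_
    filter_upwards [hXpos, hYpos] with ω hx hy
    by_cases hωA : ω ∈ A
    · simp only [Set.indicator_of_mem hωA]; positivity
    · simp [Set.indicator_of_notMem hωA]
  have hC10 : 0 ≤ ∫ ω, A.indicator (fun ω' => X ω' ^ 2) ω ∂P :=
    integral_nonneg (fun ω => Set.indicator_nonneg (fun x _ => sq_nonneg _) ω)
  have hC20 : 0 ≤ ∫ ω, A.indicator (fun ω' => Y ω' ^ 2) ω ∂P :=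
    integral_nonneg (fun ω => Set.indicator_nonneg (fun x _ => sq_nonneg _) ω)
  set B := ∫ ω, A.indicator (fun ω' => 1 / (X ω' * Y ω')) ω ∂P with hB_def
  set a0 := (P A).toReal with ha0_def
  set D1 := ∫ ω, X ω ^ (2^(n+1)) ∂P with hD1_def
  set D2 := ∫ ω, Y ω ^ (2^(n+1)) ∂P with hD2_def
  have hEnn : (0:ℝ) ≤ (a0 ^ (1 - (2:ℝ)^(-(n:ℝ))) * D1 ^ ((2:ℝ)^(-(n:ℝ)))) ^ ((1:ℝ)/2) :=
    Real.rpow_nonneg (mul_nonneg (Real.rpow_nonneg ha _) (Real.rpow_nonneg hD1pos.le _)) _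
  have heq := alg_aux a0 D1 D2 hPApos hD1pos hD2pos n
  calc a0 ≤ B ^ ((1:ℝ)/2) * (∫ ω, A.indicator (fun ω' => X ω' * Y ω') ω ∂P) ^ ((1:ℝ)/2) :=
        step1
    _ ≤ B ^ ((1:ℝ)/2) *
        ((∫ ω, A.indicator (fun ω' => X ω' ^ 2) ω ∂P) ^ ((1:ℝ)/2) *
          (∫ ω, A.indicator (fun ω' => Y ω' ^ 2) ω ∂P) ^ ((1:ℝ)/2)) ^ ((1:ℝ)/2) :=
        mul_le_mul_of_nonneg_left (Real.rpow_le_rpow hC0 step2 (by norm_num))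
          (Real.rpow_nonneg hB0 _)
    _ ≤ B ^ ((1:ℝ)/2) *
        ((a0 ^ (1 - (2:ℝ)^(-(n:ℝ))) * D1 ^ ((2:ℝ)^(-(n:ℝ)))) ^ ((1:ℝ)/2) *
          (a0 ^ (1 - (2:ℝ)^(-(n:ℝ))) * D2 ^ ((2:ℝ)^(-(n:ℝ)))) ^ ((1:ℝ)/2)) ^ ((1:ℝ)/2) := by
        refine mul_le_mul_of_nonneg_left
          (Real.rpow_le_rpow (mul_nonneg (Real.rpow_nonneg hC10 _) (Real.rpow_nonneg hC20 _))
            ?_ (by norm_num)) (Real.rpow_nonneg hB0 _)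
        exact mul_le_mul (Real.rpow_le_rpow hC10 (by rwa [Real.rpow_neg (by norm_num), Real.rpow_natCast]) (by norm_num))
          (Real.rpow_le_rpow hC20 (by rwa [Real.rpow_neg (by norm_num), Real.rpow_natCast]) (by norm_num)) (Real.rpow_nonneg hC20 _) hEnn
    _ = B ^ ((1:ℝ)/2) * a0 ^ ((1:ℝ)/2 - (2:ℝ)^(-(((n:ℕ)+1:ℕ):ℝ))) *
          D1 ^ ((2:ℝ)^(-((((n:ℕ)+1:ℕ):ℝ)+1))) * D2 ^ ((2:ℝ)^(-((((n:ℕ)+1:ℕ):ℝ)+1))) := by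
        rw [heq]
        push_cast
        ring
end
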